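/- arXiv:2411.07103 — 2 statements merged into one kernel-verified Lean document; each statement's English description precedes it below -/
import Mathlib

section
/- Variation-diminishing property for monotone sequences under stochastic kernels with the TP₂ (totally positive of order 2) property: if K : ℕ × ℕ → ℝ≥0 has all rows summing to 1, satisfies K(i,j)K(i',j') ≥ K(i,j')K(i',j) for all i ≤ i', j ≤ j', and u : ℕ → ℝ is a bounded nondecreasing sequence, then v_n = Σ_j K(n,j) u_j is nondecreasing in n. -/
/-!
TP₂ says that the rows of `K` have monotone likelihood ratio: `K i' · / K i ·` is nondecreasing
for `i ≤ i'`. Comparing the mass each row puts on an upper set `S` with its mass on `Sᶜ` then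
shows that row `i'` stochastically dominates row `i`. By Abel summation,
`∑ⱼ K n j (u j - u 0) = ∑ₘ (u (m+1) - u m) · (mass of row n beyond m)`,
a nonnegative combination of tail masses, so it increases with `n`.
Working in `ℝ≥0∞` makes all rearrangements free.
-/

open Set
open scoped ENNReal

namespace ENNReal

variable {α : Type*} [LinearOrder α] {p q : α → ℝ≥0∞} {S : Set α}

theorem tsum_indicator_mul_tsum_indicator_compl_le
    (hpq : ∀ j j', j ≤ j' → p j' * q j ≤ p j * q j') (hS : IsUpperSet S) :
    (∑' j, S.indicator p j) * ∑' j, Sᶜ.indicator q j ≤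
      (∑' j, Sᶜ.indicator p j) * ∑' j, S.indicator q j := by
  rw [← ENNReal.tsum_mul_right, mul_comm, ← ENNReal.tsum_mul_right]
  refine ENNReal.tsum_le_tsum fun j => ?_
  rw [← ENNReal.tsum_mul_left, ← ENNReal.tsum_mul_left]
  refine ENNReal.tsum_le_tsum fun j' => ?_
  by_cases hj : j ∈ S
  · by_cases hj' : j' ∈ S
    · simp [hj']
    · have hj'j : j' ≤ j := le_of_not_ge fun hjj' => hj' (hS hjj' hj)
      simpa [hj, hj', mul_comm] using hpq j' j hj'j
  · simp [hj]

theorem tsum_indicator_le_tsum_indicator_of_mul_le_mul (hp : ∑' j, p j = 1) (hq : ∑' j, q j = 1)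
    (hpq : ∀ j j', j ≤ j' → p j' * q j ≤ p j * q j') (hS : IsUpperSet S) :
    ∑' j, S.indicator p j ≤ ∑' j, S.indicator q j := by
  have hsplit :
      ∀ f : α → ℝ≥0∞, ∑' j, S.indicator f j + ∑' j, Sᶜ.indicator f j = ∑' j, f j :=
    fun f => by rw [← ENNReal.tsum_add, ← Pi.add_def, indicator_self_add_compl]
  calc ∑' j, S.indicator p j
      = (∑' j, S.indicator p j) * (∑' j, S.indicator q j + ∑' j, Sᶜ.indicator q j) := by
        rw [hsplit, hq, mul_one]
    _ ≤ (∑' j, S.indicator p j + ∑' j, Sᶜ.indicator p j) * ∑' j, S.indicator q j := by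
        rw [mul_add, add_mul, mul_comm (∑' j, S.indicator p j)]
        exact add_le_add le_rfl (tsum_indicator_mul_tsum_indicator_compl_le hpq hS)
    _ = ∑' j, S.indicator q j := by rw [hsplit, hp, one_mul]

theorem tsum_mul_ofReal_sub_eq_tsum_mul_tsum_indicator_Ioi (w : ℕ → ℝ≥0∞)
    {u : ℕ → ℝ} (hu : Monotone u) :
    ∑' j, w j * ENNReal.ofReal (u j - u 0) =
      ∑' m, ENNReal.ofReal (u (m + 1) - u m) * ∑' j, (Ioi m).indicator w j := by
  have hterm : ∀ j, w j * ENNReal.ofReal (u j - u 0) =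
      ∑' m, ENNReal.ofReal (u (m + 1) - u m) * (Ioi m).indicator w j := by
    intro j
    rw [tsum_eq_sum (s := Finset.range j) fun m hm => by simp [Finset.mem_range.not.1 hm],
      ← Finset.sum_range_sub u j,
      ENNReal.ofReal_sum_of_nonneg fun m _ => sub_nonneg.2 (hu m.le_succ), Finset.mul_sum]
    refine Finset.sum_congr rfl fun m hm => ?_
    rw [indicator_of_mem (mem_Ioi.2 (Finset.mem_range.1 hm)), mul_comm]
  rw [tsum_congr hterm, ENNReal.tsum_comm]
  exact tsum_congr fun m => ENNReal.tsum_mul_left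

theorem ofReal_eq_tsum_mul_tsum_indicator_Ioi_of_hasSum {p u : ℕ → ℝ} {s : ℝ}
    (hp : ∀ j, 0 ≤ p j) (hu : Monotone u) (hs : HasSum (fun j => p j * (u j - u 0)) s) :
    ENNReal.ofReal s = ∑' m, ENNReal.ofReal (u (m + 1) - u m) *
      ∑' j, (Ioi m).indicator (fun j => ENNReal.ofReal (p j)) j := by
  have hterm_nonneg : ∀ j, 0 ≤ p j * (u j - u 0) :=
    fun j => mul_nonneg (hp j) (sub_nonneg.2 (hu j.zero_le))
  rw [← hs.tsum_eq, ENNReal.ofReal_tsum_of_nonneg hterm_nonneg hs.summable,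
    ← tsum_mul_ofReal_sub_eq_tsum_mul_tsum_indicator_Ioi _ hu]
  simp_rw [ENNReal.ofReal_mul (hp _)]

end ENNReal

theorem HasSum.mul_sub_of_hasSum_one {β : Type*} {p u : β → ℝ} {s : ℝ} (hp : HasSum p 1)
    (hpu : HasSum (fun j => p j * u j) s) (c : ℝ) :
    HasSum (fun j => p j * (u j - c)) (s - c) := by
  simpa [mul_sub] using hpu.sub (hp.mul_right c)

theorem tp2_kernel_preserves_monotone_general
    (K : ℕ → ℕ → ℝ)
    (hK_nonneg : ∀ i j, 0 ≤ K i j)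
    (hK_row : ∀ n, HasSum (fun j => K n j) 1)
    (hTP2 : ∀ i i' j j' : ℕ, i ≤ i' → j ≤ j' →
      K i j' * K i' j ≤ K i j * K i' j')
    (u : ℕ → ℝ) (hu_mono : Monotone u)
    (hsum : ∀ n, Summable (fun j => K n j * u j)) :
    Monotone (fun n => ∑' j : ℕ, K n j * u j) := by
  intro i i' hii'
  have hrow : ∀ n, ∑' j, ENNReal.ofReal (K n j) = 1 := fun n => by
    rw [← ENNReal.ofReal_tsum_of_nonneg (hK_nonneg n) (hK_row n).summable, (hK_row n).tsum_eq,
      ENNReal.ofReal_one]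
  have hdominated : ∀ m, ∑' j, (Ioi m).indicator (fun j => ENNReal.ofReal (K i j)) j ≤
      ∑' j, (Ioi m).indicator (fun j => ENNReal.ofReal (K i' j)) j := fun m =>
    ENNReal.tsum_indicator_le_tsum_indicator_of_mul_le_mul (hrow i) (hrow i')
      (fun j j' hjj' => by
        simp only [← ENNReal.ofReal_mul (hK_nonneg _ _)]
        exact ENNReal.ofReal_le_ofReal (hTP2 i i' j j' hii' hjj'))
      (isUpperSet_Ioi m)
  have hcentered : ∀ n, HasSum (fun j => K n j * (u j - u 0)) (∑' j, K n j * u j - u 0) :=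
    fun n => (hK_row n).mul_sub_of_hasSum_one (hsum n).hasSum (u 0)
  have hle : ENNReal.ofReal (∑' j, K i j * u j - u 0) ≤
      ENNReal.ofReal (∑' j, K i' j * u j - u 0) := by
    rw [ENNReal.ofReal_eq_tsum_mul_tsum_indicator_Ioi_of_hasSum (hK_nonneg i) hu_mono (hcentered i),
      ENNReal.ofReal_eq_tsum_mul_tsum_indicator_Ioi_of_hasSum (hK_nonneg i') hu_mono (hcentered i')]
    exact ENNReal.tsum_le_tsum fun m => mul_le_mul_of_nonneg_left (hdominated m) zero_le
  have hshifted_mean_nonneg : 0 ≤ ∑' j, K i' j * u j - u 0 := (hcentered i').nonneg fun j =>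
    mul_nonneg (hK_nonneg i' j) (sub_nonneg.2 (hu_mono j.zero_le))
  linarith [(ENNReal.ofReal_le_ofReal_iff hshifted_mean_nonneg).1 hle]

/-- Variation-diminishing property for monotone sequences: a TP₂ stochastic
kernel maps bounded nondecreasing sequences to nondecreasing sequences. -/
theorem tp2_kernel_preserves_monotone
    (K : ℕ → ℕ → ℝ)
    (hK_nonneg : ∀ i j, 0 ≤ K i j)
    (hK_row : ∀ n, HasSum (fun j => K n j) 1)
    (hTP2 : ∀ i i' j j' : ℕ, i ≤ i' → j ≤ j' →
      K i j' * K i' j ≤ K i j * K i' j')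
    (u : ℕ → ℝ) (M : ℝ) (hu_bdd : ∀ j, |u j| ≤ M) (hu_mono : Monotone u)
    (hsum : ∀ n, Summable (fun j => K n j * u j)) :
    Monotone (fun n => ∑' j : ℕ, K n j * u j) :=
  tp2_kernel_preserves_monotone_general K hK_nonneg hK_row hTP2 u hu_mono hsum
end

section
/- Optimality of threshold rules in the monotone case: let f, g : ℕ → ℝ with g the continuation payoff satisfying g_{k-1} = p_k f_k + (1−p_k) g_k, p_k ∈ (0,1], g bounded, g_∞ := lim g_k = 0, and suppose the stopping set S = {k : f_k ≥ g_k} is upward closed with minimum k*. Then for every k ≥ k*−1, g_k ≤ g_{k*-1}, and g_{k*-1} equals the value sup over all threshold rules: g_{k*-1} = max_{j≥0} g_j. -/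
open Filter

/-- Optimality of the threshold rule in the monotone case: if the stopping set
`{k ≥ 1 : f k ≥ g k}` is upward closed with minimum `kstar`, then `g` attains
its maximum at `kstar - 1`, which is thus the value of the problem among all
threshold rules. -/
theorem threshold_rule_optimal
    (p f g : ℕ → ℝ) (M : ℝ)
    (hp : ∀ k, 0 < p k ∧ p k ≤ 1)
    (hrec : ∀ k, 1 ≤ k → g (k - 1) = p k * f k + (1 - p k) * g k)
    (hg_bdd : ∀ k, |g k| ≤ M)
    (hg_lim : Tendsto g atTop (nhds 0))
    (kstar : ℕ) (hk1 : 1 ≤ kstar)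
    (hkS : g kstar ≤ f kstar)
    (hkmin : ∀ k, 1 ≤ k → k < kstar → ¬ g k ≤ f k)
    (hup : ∀ k l, 1 ≤ k → k ≤ l → g k ≤ f k → g l ≤ f l) :
    (∀ k, kstar - 1 ≤ k → g k ≤ g (kstar - 1)) ∧
      (∀ j : ℕ, g j ≤ g (kstar - 1)) := by
  have step1 : ∀ k, 1 ≤ k → g k ≤ f k → g k ≤ g (k - 1) := by
    intro k hk h
    have h1 := hrec k hk
    have h2 := (hp k).1
    nlinarith
  have step2 : ∀ k, 1 ≤ k → f k < g k → g (k - 1) ≤ g k := by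
    intro k hk h
    have h1 := hrec k hk
    have h2 := (hp k).1
    nlinarith
  have partA : ∀ n : ℕ, g (kstar - 1 + n) ≤ g (kstar - 1) := by
    intro n
    induction n with
    | zero => simp
    | succ n ih =>
      have hk : kstar - 1 + (n + 1) = kstar + n := by omega
      have h1 : 1 ≤ kstar + n := by omega
      have h2 : g (kstar + n) ≤ f (kstar + n) :=
        hup kstar (kstar + n) hk1 (Nat.le_add_right _ _) hkS
      have h3 := step1 (kstar + n) h1 h2
      have hk2 : kstar + n - 1 = kstar - 1 + n := by omega
      rw [hk]
      exact le_trans h3 (by rw [hk2]; exact ih)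
  have partB : ∀ d : ℕ, g (kstar - 1 - d) ≤ g (kstar - 1) := by
    intro d
    induction d with
    | zero => simp
    | succ d ih =>
      by_cases hz : kstar - 1 - d = 0
      · have : kstar - 1 - (d + 1) = kstar - 1 - d := by omega
        rw [this]; exact ih
      · set k := kstar - 1 - d with hkdef
        have hk : 1 ≤ k := by omega
        have hlt : k < kstar := by omega
        have hf : f k < g k := lt_of_not_ge (hkmin k hk hlt)
        have h3 := step2 k hk hf
        have : kstar - 1 - (d + 1) = k - 1 := by omega
        rw [this]
        exact le_trans h3 ih
  constructor
  · intro k hk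
    have : k = kstar - 1 + (k - (kstar - 1)) := by omega
    rw [this]; exact partA _
  · intro j
    by_cases hj : j ≤ kstar - 1
    · have : j = kstar - 1 - (kstar - 1 - j) := by omega
      rw [this]; exact partB _
    · have : j = kstar - 1 + (j - (kstar - 1)) := by omega
      rw [this]; exact partA _
end
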